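/- arXiv:1508.01865 — 3 statements merged into one kernel-verified Lean document; each statement's English description precedes it below -/
import Mathlib

section
/- Let n ≥ 3 and 1 ≤ p, q ≤ n−1 with 2p ≠ n and 2q ≠ n. Set t = gcd(n, q) and s = n/t. Then the I-graph I(n,p,q) is connected if and only if gcd(t, p) = 1 and gcd(gcd(s, p), q) = 1. -/
/-- The I-graph `I(n,p,q)`: vertices are pairs `(b, i)` where `b = false` gives the
outer vertex `v_i` and `b = true` gives the inner vertex `u_i` (`i ∈ ℤ/nℤ`).
Edges: outer edges `[v_i, v_{i+p}]`, spokes `[v_i, u_i]`, inner edges `[u_i, u_{i+q}]`. -/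
def IGraph (n p q : ℕ) : SimpleGraph (Bool × ZMod n) :=
  SimpleGraph.fromRel (fun a b =>
    (a.1 = false ∧ b.1 = false ∧ b.2 = a.2 + (p : ZMod n)) ∨
    (a.1 = false ∧ b.1 = true ∧ b.2 = a.2) ∨
    (a.1 = true ∧ b.1 = true ∧ b.2 = a.2 + (q : ZMod n)))


/-- With `t = gcd(n,q)` and `s = n/t`, the I-graph `I(n,p,q)` is connected iff
`gcd(t,p) = 1` and `gcd(gcd(s,p),q) = 1`. -/
theorem igraph_connected_iff (n p q : ℕ) (hn : 3 ≤ n)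
    (hp1 : 1 ≤ p) (hpn : p ≤ n - 1) (hq1 : 1 ≤ q) (hqn : q ≤ n - 1)
    (h2p : 2 * p ≠ n) (h2q : 2 * q ≠ n) :
    (IGraph n p q).Connected ↔
      Nat.gcd (Nat.gcd n q) p = 1 ∧ Nat.gcd (Nat.gcd (n / Nat.gcd n q) p) q = 1 := by
  haveI : NeZero n := ⟨by omega⟩
  have hpz : (p : ZMod n) ≠ 0 := by
    rw [Ne, ZMod.natCast_eq_zero_iff]
    intro h
    have := Nat.le_of_dvd (by omega) h
    omega
  have hqz : (q : ZMod n) ≠ 0 := by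
    rw [Ne, ZMod.natCast_eq_zero_iff]
    intro h
    have := Nat.le_of_dvd (by omega) h
    omega
  constructor
  · intro hc
    have key : Nat.gcd (Nat.gcd n q) p = 1 := by
      by_contra hd
      set d := Nat.gcd (Nat.gcd n q) p with hdef
      have hdn : d ∣ n := dvd_trans (Nat.gcd_dvd_left _ _) (Nat.gcd_dvd_left n q)
      have hdp : d ∣ p := Nat.gcd_dvd_right _ _
      have hdq : d ∣ q := dvd_trans (Nat.gcd_dvd_left _ _) (Nat.gcd_dvd_right n q)
      have hd1 : 1 < d := by
        have hpos : 0 < d := Nat.gcd_pos_of_pos_right _ (by omega)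
        omega
      haveI : NeZero d := ⟨by omega⟩
      haveI : Fact (1 < d) := ⟨hd1⟩
      set f : ZMod n →+* ZMod d := ZMod.castHom hdn (ZMod d) with hf
      have hfp : f p = 0 := by
        rw [map_natCast, ZMod.natCast_eq_zero_iff]; exact hdp
      have hfq : f q = 0 := by
        rw [map_natCast, ZMod.natCast_eq_zero_iff]; exact hdq
      have inv : ∀ a b : Bool × ZMod n, (IGraph n p q).Adj a b → f a.2 = f b.2 := by
        intro a b hadj
        rw [IGraph, SimpleGraph.fromRel_adj] at hadj
        rcases hadj.2 with (⟨-, -, h⟩ | ⟨-, -, h⟩ | ⟨-, -, h⟩) |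
          (⟨-, -, h⟩ | ⟨-, -, h⟩ | ⟨-, -, h⟩) <;>
          rw [h] <;> simp [map_add, hfp, hfq]
      have walkinv : ∀ a b : Bool × ZMod n, (IGraph n p q).Reachable a b →
          f a.2 = f b.2 := by
        intro a b hr
        obtain ⟨w⟩ := hr
        induction w with
        | nil => rfl
        | cons h w ih => exact (inv _ _ h).trans ih
      have h01 := walkinv (false, (0 : ZMod n)) (false, (1 : ZMod n))
        (hc.preconnected _ _)
      simp only [map_zero, map_one] at h01
      exact zero_ne_one h01
    refine ⟨key, ?_⟩
    set t := Nat.gcd n q with ht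
    set g := Nat.gcd (Nat.gcd (n / t) p) q with hg
    have hgq : g ∣ q := Nat.gcd_dvd_right _ _
    have hgp : g ∣ p := dvd_trans (Nat.gcd_dvd_left _ _) (Nat.gcd_dvd_right _ _)
    have hgn : g ∣ n := dvd_trans (dvd_trans (Nat.gcd_dvd_left _ _) (Nat.gcd_dvd_left _ _))
      (Nat.div_dvd_of_dvd (Nat.gcd_dvd_left n q))
    have : g ∣ 1 := key ▸ Nat.dvd_gcd (Nat.dvd_gcd hgn hgq) hgp
    exact Nat.dvd_one.mp this
  · rintro ⟨h1, -⟩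
    -- basic edges
    have outer : ∀ x : ZMod n, (IGraph n p q).Adj (false, x) (false, x + p) := by
      intro x
      rw [IGraph, SimpleGraph.fromRel_adj]
      refine ⟨?_, Or.inl (Or.inl ⟨rfl, rfl, rfl⟩)⟩
      simp only [Ne, Prod.mk.injEq, true_and]
      intro h
      exact hpz (by linear_combination h.symm)
    have inner : ∀ x : ZMod n, (IGraph n p q).Adj (true, x) (true, x + q) := by
      intro x
      rw [IGraph, SimpleGraph.fromRel_adj]
      refine ⟨?_, Or.inl (Or.inr (Or.inr ⟨rfl, rfl, rfl⟩))⟩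
      simp only [Ne, Prod.mk.injEq, true_and]
      intro h
      exact hqz (by linear_combination h.symm)
    have spoke : ∀ x : ZMod n, (IGraph n p q).Adj (false, x) (true, x) := by
      intro x
      rw [IGraph, SimpleGraph.fromRel_adj]
      exact ⟨by simp, Or.inl (Or.inr (Or.inl ⟨rfl, rfl, rfl⟩))⟩
    have stepp : ∀ x : ZMod n, (IGraph n p q).Reachable (false, x) (false, x + p) :=
      fun x => (outer x).reachable
    have stepq : ∀ x : ZMod n, (IGraph n p q).Reachable (false, x) (false, x + q) :=
      fun x => ((spoke x).reachable.trans (inner x).reachable).trans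
        (spoke (x + q)).reachable.symm
    have iterp : ∀ (z : ℤ) (x : ZMod n),
        (IGraph n p q).Reachable (false, x) (false, x + (z : ZMod n) * (p : ZMod n)) := by
      intro z
      induction z using Int.induction_on with
      | zero => intro x; simpa using SimpleGraph.Reachable.refl _
      | succ k ih =>
        intro x
        have h := (ih x).trans (stepp (x + ((k : ℤ) : ZMod n) * (p : ZMod n)))
        have e : x + ((k : ℤ) : ZMod n) * (p : ZMod n) + (p : ZMod n)
            = x + (((k : ℤ) + 1 : ℤ) : ZMod n) * (p : ZMod n) := by push_cast; ring
        rwa [e] at h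
      | pred k ih =>
        intro x
        have h := (stepp (x + ((-(k : ℤ) - 1 : ℤ) : ZMod n) * (p : ZMod n))).symm
        have e : x + ((-(k : ℤ) - 1 : ℤ) : ZMod n) * (p : ZMod n) + (p : ZMod n)
            = x + ((-(k : ℤ) : ℤ) : ZMod n) * (p : ZMod n) := by push_cast; ring
        rw [e] at h
        exact (ih x).trans h
    have iterq : ∀ (z : ℤ) (x : ZMod n),
        (IGraph n p q).Reachable (false, x) (false, x + (z : ZMod n) * (q : ZMod n)) := by
      intro z
      induction z using Int.induction_on with
      | zero => intro x; simpa using SimpleGraph.Reachable.refl _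
      | succ k ih =>
        intro x
        have h := (ih x).trans (stepq (x + ((k : ℤ) : ZMod n) * (q : ZMod n)))
        have e : x + ((k : ℤ) : ZMod n) * (q : ZMod n) + (q : ZMod n)
            = x + (((k : ℤ) + 1 : ℤ) : ZMod n) * (q : ZMod n) := by push_cast; ring
        rwa [e] at h
      | pred k ih =>
        intro x
        have h := (stepq (x + ((-(k : ℤ) - 1 : ℤ) : ZMod n) * (q : ZMod n))).symm
        have e : x + ((-(k : ℤ) - 1 : ℤ) : ZMod n) * (q : ZMod n) + (q : ZMod n)
            = x + ((-(k : ℤ) : ℤ) : ZMod n) * (q : ZMod n) := by push_cast; ring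
        rw [e] at h
        exact (ih x).trans h
    -- Bezout in ZMod n
    set A := Nat.gcdA n q with hA
    set B := Nat.gcdB n q with hB
    set C := Nat.gcdA (Nat.gcd n q) p with hC
    set D := Nat.gcdB (Nat.gcd n q) p with hD
    have bz1 : (Nat.gcd n q : ℤ) = n * A + q * B := Nat.gcd_eq_gcd_ab n q
    have bz2 : ((Nat.gcd (Nat.gcd n q) p : ℕ) : ℤ) = (Nat.gcd n q) * C + p * D :=
      Nat.gcd_eq_gcd_ab (Nat.gcd n q) p
    have bzint : (1 : ℤ) = n * (A * C) + p * D + q * (B * C) := by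
      rw [h1, bz1] at bz2
      linear_combination bz2
    have bez : (1 : ZMod n) = (p : ZMod n) * ((D : ℤ) : ZMod n) +
        (q : ZMod n) * ((B : ℤ) : ZMod n) * ((C : ℤ) : ZMod n) := by
      have := congrArg (fun z : ℤ => (z : ZMod n)) bzint
      push_cast at this
      rw [ZMod.natCast_self] at this
      linear_combination this
    have reach : ∀ v : Bool × ZMod n, (IGraph n p q).Reachable (false, (0 : ZMod n)) v := by
      rintro ⟨b, i⟩
      have hfalse : ∀ i : ZMod n, (IGraph n p q).Reachable (false, (0 : ZMod n)) (false, i) := by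
        intro i
        obtain ⟨m, rfl⟩ : ∃ m : ℕ, (m : ZMod n) = i := ⟨i.val, ZMod.natCast_zmod_val i⟩
        have r1 := iterp ((m : ℤ) * D) 0
        have r2 := iterq ((m : ℤ) * (B * C))
          ((0 : ZMod n) + (((m : ℤ) * D : ℤ) : ZMod n) * (p : ZMod n))
        have r := r1.trans r2
        have e : (0 : ZMod n) + (((m : ℤ) * D : ℤ) : ZMod n) * (p : ZMod n)
            + (((m : ℤ) * (B * C) : ℤ) : ZMod n) * (q : ZMod n) = (m : ZMod n) := by
          push_cast
          linear_combination (m : ZMod n) * bez.symm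
        rwa [e] at r
      cases b
      · exact hfalse i
      · exact (hfalse i).trans (spoke i).reachable
    rw [SimpleGraph.connected_iff]
    exact ⟨fun a b => (reach a).symm.trans (reach b), ⟨(false, 0)⟩⟩
end

section
/- Let s ≥ 3, t ≥ 2 and 1 ≤ r ≤ s−1 be integers with gcd(s, t, r) = 1, and let k be an integer with 0 < k < st, gcd(k, t) = 1 and k ≡ r (mod s). Then the graph X(s,t,r) is isomorphic to the circulant graph Cir(st; ±t, ±k). -/
/-- The graph `X(s,t,r)`: vertices `x^i_j` are pairs `(i, j) ∈ Fin t × ℤ/sℤ`.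
Edges: horizontal `[x^i_j, x^i_{j+1}]`; vertical `[x^i_j, x^{i+1}_j]` for `0 ≤ i ≤ t-2`;
diagonal `[x^{t-1}_j, x^0_{j+r}]` (column subscripts mod `s`). -/
def Xgraph (s t r : ℕ) : SimpleGraph (Fin t × ZMod s) :=
  SimpleGraph.fromRel (fun a b =>
    (a.1 = b.1 ∧ b.2 = a.2 + 1) ∨
    ((b.1 : ℕ) = (a.1 : ℕ) + 1 ∧ b.2 = a.2) ∨
    ((a.1 : ℕ) = t - 1 ∧ (b.1 : ℕ) = 0 ∧ b.2 = a.2 + (r : ZMod s)))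

/-- The circulant graph `Cir(n; ±a, ±b)` on `ℤ/nℤ`: `x` and `y` are adjacent iff
`x - y ≡ ±a` or `±b (mod n)`. -/
def Cir (n a b : ℕ) : SimpleGraph (ZMod n) :=
  SimpleGraph.circulantGraph {(a : ZMod n), (b : ZMod n)}

/-- For `s ≥ 3`, `t ≥ 2`, `1 ≤ r ≤ s-1` with `gcd(s,t,r) = 1`, and `k` with
`0 < k < st`, `gcd(k,t) = 1`, `k ≡ r (mod s)`, the graph `X(s,t,r)` is isomorphic
to the circulant graph `Cir(st; ±t, ±k)`. -/
theorem xgraph_iso_circulant (s t r k : ℕ) (hs : 3 ≤ s) (ht : 2 ≤ t)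
    (hr1 : 1 ≤ r) (hrs : r ≤ s - 1) (hgcd : Nat.gcd (Nat.gcd s t) r = 1)
    (hk0 : 0 < k) (hkst : k < s * t) (hkt : Nat.gcd k t = 1) (hkr : k ≡ r [MOD s]) :
    Nonempty (Xgraph s t r ≃g Cir (s * t) t k) := by
  haveI : NeZero s := ⟨by omega⟩
  haveI : NeZero t := ⟨by omega⟩
  haveI : NeZero (s * t) := ⟨by positivity⟩
  set n := s * t with hn
  -- the map
  set f : Fin t × ZMod s → ZMod n := fun p => ((k * (p.1 : ℕ) + t * p.2.val : ℕ) : ZMod n)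
    with hf
  have htst : t ∣ n := dvd_mul_left t s
  -- key: multiplication by t transports MOD s congruences to MOD n
  have key : ∀ m m' : ℕ, m ≡ m' [MOD s] → t * m ≡ t * m' [MOD n] := by
    intro m m' h
    have := Nat.ModEq.mul_left' (c := t) h
    rwa [mul_comm t s] at this
  -- injectivity
  have hinj : Function.Injective f := by
    rintro ⟨i, x⟩ ⟨i', x'⟩ h
    simp only [hf] at h
    rw [ZMod.natCast_eq_natCast_iff] at h
    have h1 : k * (i : ℕ) ≡ k * (i' : ℕ) [MOD t] := by
      have h2 := h.of_dvd htst
      have z : ∀ m p : ℕ, k * m + t * p ≡ k * m [MOD t] := fun m p =>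
        Nat.add_mul_mod_self_left (k * m) t p
      exact ((z _ _).symm.trans h2).trans (z _ _)
    have hi : (i : ℕ) = (i' : ℕ) := by
      have := Nat.ModEq.cancel_left_of_coprime (by rwa [Nat.gcd_comm] at hkt) h1
      have := this.eq_of_lt_of_lt i.isLt i'.isLt
      exact this
    rw [hi] at h
    have h3 : t * x.val ≡ t * x'.val [MOD t * s] := by
      rw [mul_comm t s]; exact h.add_left_cancel' _
    have h4 : x.val ≡ x'.val [MOD s] :=
      Nat.ModEq.mul_left_cancel' (by omega) h3
    have hx : x = x' := by
      have := h4.eq_of_lt_of_lt (ZMod.val_lt x) (ZMod.val_lt x')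
      exact ZMod.val_injective s this
    exact Prod.ext (Fin.ext hi) hx
  have hbij : Function.Bijective f := by
    rw [Fintype.bijective_iff_injective_and_card]
    refine ⟨hinj, ?_⟩
    simp [ZMod.card, mul_comm]
    exact hn.symm
  -- translation of ZMod equation to Nat congruence
  have trans : ∀ (i i' : Fin t) (x x' : ZMod s) (c : ℕ),
      (f (i', x') - f (i, x) = (c : ZMod n)) ↔
        (k * (i' : ℕ) + t * x'.val ≡ k * (i : ℕ) + t * x.val + c [MOD n]) := by
    intro i i' x x' c
    rw [sub_eq_iff_eq_add, hf, ← ZMod.natCast_eq_natCast_iff]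
    push_cast
    constructor <;> intro h <;> linear_combination h
  -- val of sums mod s
  have valadd : ∀ (x : ZMod s) (m : ℕ), (x + (m : ZMod s)).val ≡ x.val + m [MOD s] := by
    intro x m
    have : (x + (m : ZMod s)).val = (x.val + ((m : ZMod s)).val) % s := ZMod.val_add _ _
    rw [this]
    calc (x.val + ((m : ZMod s)).val) % s ≡ x.val + ((m : ZMod s)).val [MOD s] := Nat.mod_modEq _ _
      _ ≡ x.val + m [MOD s] := Nat.ModEq.add_left _ (by simp [ZMod.val_natCast, Nat.mod_modEq])
  -- kill t-multiples mod t
  have z : ∀ m p : ℕ, k * m + t * p ≡ k * m [MOD t] := fun m p =>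
    Nat.add_mul_mod_self_left (k * m) t p
  -- the relation defining Xgraph
  set R : (Fin t × ZMod s) → (Fin t × ZMod s) → Prop := fun a b =>
    (a.1 = b.1 ∧ b.2 = a.2 + 1) ∨
    ((b.1 : ℕ) = (a.1 : ℕ) + 1 ∧ b.2 = a.2) ∨
    ((a.1 : ℕ) = t - 1 ∧ (b.1 : ℕ) = 0 ∧ b.2 = a.2 + (r : ZMod s)) with hR
  have fwd : ∀ a b, R a b → (f b - f a = (t : ZMod n) ∨ f b - f a = (k : ZMod n)) := by
    rintro ⟨i, x⟩ ⟨i', x'⟩ hRab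
    simp only [hR] at hRab
    rcases hRab with ⟨h1, h2⟩ | ⟨h1, h2⟩ | ⟨h1, h2, h3⟩
    · left
      rw [trans]
      subst h1; subst h2
      have e1 : t * (x + 1).val ≡ t * (x.val + 1) [MOD n] :=
        key _ _ (by simpa using valadd x 1)
      calc k * (i : ℕ) + t * (x + 1).val ≡ k * (i : ℕ) + t * (x.val + 1) [MOD n] :=
             e1.add_left _
        _ = k * (i : ℕ) + t * x.val + t := by ring
    · right
      rw [trans]
      have e : k * (i' : ℕ) + t * x'.val = k * (i : ℕ) + t * x.val + k := by
        rw [h1, h2]; ring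
      rw [e]
    · right
      rw [trans]
      subst h3
      have e1 : t * (x + (r : ZMod s)).val ≡ t * (x.val + k) [MOD n] :=
        key _ _ ((valadd x r).trans (Nat.ModEq.add_left _ hkr.symm))
      calc k * (i' : ℕ) + t * (x + (r : ZMod s)).val
          = t * (x + (r : ZMod s)).val := by rw [h2]; ring
        _ ≡ t * (x.val + k) [MOD n] := e1
        _ = k * (t - 1) + t * x.val + k := by
            zify [show 1 ≤ t by omega]; ring
        _ = k * (i : ℕ) + t * x.val + k := by rw [h1]
  have bwd : ∀ a b, (f b - f a = (t : ZMod n) ∨ f b - f a = (k : ZMod n)) → R a b := by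
    rintro ⟨i, x⟩ ⟨i', x'⟩ hd
    simp only [hR]
    rcases hd with h | h <;> rw [trans] at h
    · -- difference t : horizontal
      have h2 := h.of_dvd htst
      have hii : k * (i' : ℕ) ≡ k * (i : ℕ) [MOD t] := by
        have e : k * (i : ℕ) + t * x.val + t = k * (i : ℕ) + t * (x.val + 1) := by ring
        rw [e] at h2
        exact ((z _ _).symm.trans h2).trans (z _ _)
      have hi : (i' : ℕ) = (i : ℕ) :=
        (Nat.ModEq.cancel_left_of_coprime (by rwa [Nat.gcd_comm] at hkt) hii).eq_of_lt_of_lt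
          i'.isLt i.isLt
      left
      refine ⟨(Fin.ext hi).symm, ?_⟩
      have h3 : t * x'.val ≡ t * (x.val + 1) [MOD t * s] := by
        rw [mul_comm t s]
        have e : k * (i' : ℕ) + t * x'.val = k * (i : ℕ) + t * x'.val := by rw [hi]
        rw [e, add_assoc] at h
        have := h.add_left_cancel' (k * (i : ℕ))
        calc t * x'.val ≡ t * x.val + t [MOD n] := this
          _ = t * (x.val + 1) := by ring
      have h4 : x'.val ≡ x.val + 1 [MOD s] := Nat.ModEq.mul_left_cancel' (by omega) h3
      have := (ZMod.natCast_eq_natCast_iff _ _ _).2 h4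
      rwa [ZMod.natCast_rightInverse x', Nat.cast_add, Nat.cast_one,
        ZMod.natCast_rightInverse x] at this
    · -- difference k : vertical or diagonal
      have h2 := h.of_dvd htst
      have hii : k * (i' : ℕ) ≡ k * ((i : ℕ) + 1) [MOD t] := by
        have e : k * (i : ℕ) + t * x.val + k = k * ((i : ℕ) + 1) + t * x.val := by ring
        rw [e] at h2
        exact ((z _ _).symm.trans h2).trans (z _ _)
      have hi : (i' : ℕ) ≡ (i : ℕ) + 1 [MOD t] :=
        Nat.ModEq.cancel_left_of_coprime (by rwa [Nat.gcd_comm] at hkt) hii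
      by_cases hc : (i : ℕ) + 1 < t
      · -- vertical
        have hieq : (i' : ℕ) = (i : ℕ) + 1 := hi.eq_of_lt_of_lt i'.isLt hc
        right; left
        refine ⟨hieq, ?_⟩
        have h3 : t * x'.val ≡ t * x.val [MOD t * s] := by
          rw [mul_comm t s]
          have e : k * (i' : ℕ) + t * x'.val = (k * (i : ℕ) + k) + t * x'.val := by
            rw [hieq]; ring
          have e2 : k * (i : ℕ) + t * x.val + k = (k * (i : ℕ) + k) + t * x.val := by ring
          rw [e, e2] at h
          exact h.add_left_cancel' _
        have h4 : x'.val ≡ x.val [MOD s] := Nat.ModEq.mul_left_cancel' (by omega) h3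
        have := (ZMod.natCast_eq_natCast_iff _ _ _).2 h4
        rwa [ZMod.natCast_rightInverse x', ZMod.natCast_rightInverse x] at this
      · -- diagonal
        have hit : (i : ℕ) + 1 = t := by have := i.isLt; omega
        have hi0 : (i' : ℕ) = 0 := by
          have ht0 : t ≡ 0 [MOD t] := (Nat.modEq_zero_iff_dvd).2 dvd_rfl
          have hio : (i : ℕ) + 1 ≡ 0 [MOD t] := by rw [hit]; exact ht0
          exact (hi.trans hio).eq_of_lt_of_lt i'.isLt (by omega)
        right; right
        refine ⟨by omega, hi0, ?_⟩
        have h3 : t * x'.val ≡ t * (x.val + k) [MOD t * s] := by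
          rw [mul_comm t s]
          have e : k * (i' : ℕ) + t * x'.val = t * x'.val := by rw [hi0]; ring
          have e2 : k * (i : ℕ) + t * x.val + k = t * (x.val + k) := by
            have : (i : ℕ) = t - 1 := by omega
            rw [this]
            zify [show 1 ≤ t by omega]; ring
          rw [e, e2] at h
          exact h
        have h4 : x'.val ≡ x.val + k [MOD s] := Nat.ModEq.mul_left_cancel' (by omega) h3
        have h5 : x'.val ≡ x.val + r [MOD s] := h4.trans (Nat.ModEq.add_left _ hkr)
        have := (ZMod.natCast_eq_natCast_iff _ _ _).2 h5
        rwa [ZMod.natCast_rightInverse x', Nat.cast_add,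
          ZMod.natCast_rightInverse x] at this
  -- assemble the isomorphism
  refine ⟨{ toEquiv := Equiv.ofBijective f hbij, map_rel_iff' := ?_ }⟩
  intro a b
  simp only [Equiv.ofBijective_apply]
  have hmem : ∀ x : ZMod n, x ∈ ({(t : ZMod n), (k : ZMod n)} : Set (ZMod n)) ↔
      (x = (t : ZMod n) ∨ x = (k : ZMod n)) := by
    intro x; simp [Set.mem_insert_iff]
  constructor
  · rintro ⟨hne, hor⟩
    refine ⟨fun e => hne (by rw [e]), ?_⟩
    rcases hor with hm | hm
    · exact Or.inr (bwd b a ((hmem _).1 hm))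
    · exact Or.inl (bwd a b ((hmem _).1 hm))
  · rintro ⟨hne, hor⟩
    refine ⟨fun e => hne (hinj e), ?_⟩
    rcases hor with hrel | hrel
    · exact Or.inr ((hmem _).2 (fwd a b hrel))
    · exact Or.inl ((hmem _).2 (fwd b a hrel))
end

section
/- Let n ≥ 3 and 1 ≤ p, q ≤ n−1 with 2p ≠ n and 2q ≠ n. Set t = gcd(n, q) and s = n/t, and assume t ≥ 2 and gcd(t, p) = 1. Let r be the integer with 0 ≤ r ≤ s−1 and r·(q/t) ≡ p (mod s). Then the circulant graph Cir(n; ±p, ±q) is isomorphic to the graph X(s,t,r). -/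
private lemma modeq_congr {n a b a' b' : ℤ} (h : a ≡ b [ZMOD n]) (ha : a' = a) (hb : b' = b) :
    a' ≡ b' [ZMOD n] := by rw [ha, hb]; exact h

private lemma dvd_interval {m x : ℤ} (hm : 0 < m) (hd : m ∣ x) (h1 : -m ≤ x) (h2 : x ≤ m - 1) :
    x = 0 ∨ x = -m := by
  obtain ⟨k, rfl⟩ := hd
  have hk1 : -1 ≤ k := by
    by_contra h
    push_neg at h
    have hk : k ≤ -2 := by omega
    nlinarith
  have hk2 : k ≤ 0 := by
    by_contra h
    push_neg at h
    nlinarith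
  interval_cases k
  · right; ring
  · left; ring

/-- Let `t = gcd(n,q) ≥ 2`, `s = n/t`, `gcd(t,p) = 1`, and let `r` with `0 ≤ r ≤ s-1`
satisfy `r·(q/t) ≡ p (mod s)`. Then `Cir(n; ±p, ±q)` is isomorphic to `X(s,t,r)`. -/
theorem circulant_iso_xgraph (n p q s t r : ℕ) (hn : 3 ≤ n)
    (hp1 : 1 ≤ p) (hpn : p ≤ n - 1) (hq1 : 1 ≤ q) (hqn : q ≤ n - 1)
    (h2p : 2 * p ≠ n) (h2q : 2 * q ≠ n)
    (ht : t = Nat.gcd n q) (hs : s = n / t) (ht2 : 2 ≤ t)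
    (htp : Nat.gcd t p = 1) (hrs : r ≤ s - 1) (hr : r * (q / t) ≡ p [MOD s]) :
    Nonempty (Cir n p q ≃g Xgraph s t r) := by
  classical
  have hn0 : 0 < n := by omega
  have htn : t ∣ n := ht ▸ Nat.gcd_dvd_left n q
  have htq : t ∣ q := ht ▸ Nat.gcd_dvd_right n q
  have ht0 : 0 < t := by omega
  have hqq : q = t * (q / t) := (Nat.mul_div_cancel' htq).symm
  have hnst : n = s * t := by rw [hs, Nat.div_mul_cancel htn]
  have hs0 : 0 < s := by
    rcases Nat.eq_zero_or_pos s with h | h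
    · subst h; simp at hnst; omega
    · exact h
  have hs2 : 2 ≤ s := by
    by_contra h
    have hs1 : s = 1 := by omega
    rw [hs1, one_mul] at hnst
    have htn' : t = n := hnst.symm
    have : n ≤ q := htn' ▸ Nat.le_of_dvd (by omega) htq
    omega
  have hsq' : Nat.gcd s (q / t) = 1 := by
    have h1 : Nat.gcd (t * s) (t * (q / t)) = t * Nat.gcd s (q / t) := Nat.gcd_mul_left t s (q / t)
    rw [← hqq, mul_comm t s, ← hnst, ← ht] at h1
    exact Nat.eq_of_mul_eq_mul_left ht0 (h1.symm.trans (mul_one t).symm)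
  haveI : NeZero n := ⟨by omega⟩
  haveI : NeZero s := ⟨by omega⟩
  -- integer versions
  have hnZ : (n : ℤ) = (s : ℤ) * t := by exact_mod_cast hnst
  have hqZ : (q : ℤ) = (t : ℤ) * (q / t : ℕ) := by exact_mod_cast hqq
  -- cancellation helpers
  have hcancelp : ∀ x y : ℤ, x * p ≡ y * p [ZMOD (t : ℤ)] → x ≡ y [ZMOD (t : ℤ)] := by
    intro x y h
    have h2 := Int.ModEq.cancel_right_div_gcd (show (0:ℤ) < t by positivity) h
    rwa [Int.gcd_natCast_natCast, htp, Nat.cast_one, Int.ediv_one] at h2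
  have hcancelq : ∀ x y : ℤ, x * (q / t : ℕ) ≡ y * (q / t : ℕ) [ZMOD (s : ℤ)] →
      x ≡ y [ZMOD (s : ℤ)] := by
    intro x y h
    have h2 := Int.ModEq.cancel_right_div_gcd (show (0:ℤ) < s by positivity) h
    rwa [Int.gcd_natCast_natCast, hsq', Nat.cast_one, Int.ediv_one] at h2
  -- multiplying by q: iff between mod n and mod s
  have hmulq : ∀ x y : ℤ, (x * q ≡ y * q [ZMOD (n : ℤ)]) ↔ x ≡ y [ZMOD (s : ℤ)] := by
    intro x y
    constructor
    · intro h
      have h2 : x * (q / t : ℕ) ≡ y * (q / t : ℕ) [ZMOD (s : ℤ)] := by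
        rw [Int.modEq_iff_dvd] at h ⊢
        rw [hnZ] at h
        have he : y * q - x * q = (y * (q / t : ℕ) - x * (q / t : ℕ)) * t := by
          rw [hqZ]; ring
        rw [he] at h
        have ht0' : (t : ℤ) ≠ 0 := by positivity
        exact (mul_dvd_mul_iff_right ht0').mp h
      exact hcancelq _ _ h2
    · intro h
      rw [Int.modEq_iff_dvd] at h ⊢
      obtain ⟨k, hk⟩ := h
      refine ⟨k * (q / t : ℕ), ?_⟩
      rw [hnZ]
      have : y * q - x * q = (y - x) * q := by ring
      rw [this, hk, hqZ]; ring
  -- reduction mod t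
  have hjq : ∀ j : ZMod s, ((j.val : ℤ) * q ≡ 0 [ZMOD (t : ℤ)]) := by
    intro j
    have hd : (t:ℤ) ∣ (j.val : ℤ) * q := Dvd.dvd.mul_left (Int.natCast_dvd_natCast.mpr htq) _
    exact Int.modEq_zero_iff_dvd.mpr hd
  have hreduce : ∀ (a b : Fin t × ZMod s) (c : ℤ),
      ((b.1:ℤ)*p + (b.2.val:ℤ)*q ≡ (a.1:ℤ)*p + (a.2.val:ℤ)*q + c [ZMOD (n:ℤ)]) →
      ((b.1:ℤ)*p ≡ (a.1:ℤ)*p + c [ZMOD (t:ℤ)]) := by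
    intro a b c h
    have h2 := h.of_dvd (Int.natCast_dvd_natCast.mpr htn)
    have h3 := h2.sub ((hjq b.2).trans (hjq a.2).symm)
    exact modeq_congr h3 (by ring) (by ring)
  have hresid : ∀ (a b : Fin t × ZMod s) (c : ℤ),
      ((b.1:ℤ)*p + (b.2.val:ℤ)*q ≡ (a.1:ℤ)*p + (a.2.val:ℤ)*q + c [ZMOD (n:ℤ)]) →
      ((b.2.val:ℤ)*q ≡ (a.2.val:ℤ)*q + (c + ((a.1:ℤ) - (b.1:ℤ))*p) [ZMOD (n:ℤ)]) := by
    intro a b c h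
    have h2 := h.sub_right ((b.1:ℤ)*p)
    exact modeq_congr h2 (by ring) (by ring)
  -- r·q' ≡ p facts
  have hrZ : (r:ℤ) * ((q / t : ℕ):ℤ) ≡ (p:ℤ) [ZMOD (s:ℤ)] := by
    have h2 := Int.natCast_modEq_iff.mpr hr
    push_cast at h2
    exact h2
  have hrq : (r:ℤ) * q ≡ (t:ℤ) * p [ZMOD (n:ℤ)] := by
    have h2 := hrZ
    rw [Int.modEq_iff_dvd] at h2 ⊢
    obtain ⟨k, hk⟩ := h2
    refine ⟨k, ?_⟩
    rw [hnZ, hqZ]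
    have he : (t:ℤ)*p - (r:ℤ)*((t:ℤ)*((q / t : ℕ):ℤ)) = ((p:ℤ) - (r:ℤ)*((q / t : ℕ):ℤ))*t := by
      ring
    rw [he, hk]; ring
  -- val casts
  have hvalZ : ∀ j : ZMod s, (((j.val : ℤ)) : ZMod s) = j := by
    intro j
    push_cast
    simp [ZMod.natCast_val, ZMod.cast_id]
  have hvadd : ∀ x y : ZMod s, ((x+y).val : ℤ) ≡ (x.val:ℤ) + (y.val:ℤ) [ZMOD (s:ℤ)] := by
    intro x y
    rw [ZMod.val_add, Int.natCast_mod]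
    push_cast
    exact Int.emod_emod_of_dvd _ dvd_rfl
  have hvcast : ∀ m : ℕ, (((m : ZMod s)).val : ℤ) ≡ (m:ℤ) [ZMOD (s:ℤ)] := by
    intro m
    rw [ZMod.val_natCast, Int.natCast_mod]
    exact Int.emod_emod_of_dvd _ dvd_rfl
  have hvalN : ∀ j : ZMod s, (((j.val : ℕ)) : ZMod s) = j := fun j => by
    simp [ZMod.natCast_val, ZMod.cast_id]
  haveI : Fact (1 < s) := ⟨by omega⟩
  have ht0' : (0:ℤ) < (t:ℤ) := by positivity
  -- case analysis lemmas
  have hq_case : ∀ a b : Fin t × ZMod s,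
      ((b.1:ℤ)*p + (b.2.val:ℤ)*q ≡ (a.1:ℤ)*p + (a.2.val:ℤ)*q + (q:ℤ) [ZMOD (n:ℤ)]) →
      a.1 = b.1 ∧ b.2 = a.2 + 1 := by
    intro a b h
    have h1 := hreduce a b q h
    have hq0 : (q:ℤ) ≡ 0 [ZMOD (t:ℤ)] :=
      Int.modEq_zero_iff_dvd.mpr (Int.natCast_dvd_natCast.mpr htq)
    have h4 : ((a.1:ℤ)*p + (q:ℤ)) ≡ ((a.1:ℤ)*p) [ZMOD (t:ℤ)] := by
      have h5 := (Int.ModEq.refl ((a.1:ℤ)*p)).add hq0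
      simpa using h5
    have h5 := hcancelp _ _ (h1.trans h4)
    have hd := h5.dvd
    have hb1 := b.1.isLt
    have ha1 := a.1.isLt
    have hba : a.1 = b.1 := by
      rcases dvd_interval ht0' hd (by push_cast; omega) (by push_cast; omega) with h6 | h6
      · exact Fin.ext (by omega)
      · exfalso; omega
    have h7 := hresid a b q h
    have h8 : (b.2.val:ℤ) * q ≡ ((a.2.val:ℤ) + 1) * q [ZMOD (n:ℤ)] := by
      refine modeq_congr h7 rfl ?_
      rw [hba]; ring
    have h9 := (hmulq _ _).mp h8
    have h10 := (ZMod.intCast_eq_intCast_iff _ _ _).mpr h9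
    push_cast at h10
    rw [hvalN, hvalN] at h10
    exact ⟨hba, h10⟩
  have hp_case : ∀ a b : Fin t × ZMod s,
      ((b.1:ℤ)*p + (b.2.val:ℤ)*q ≡ (a.1:ℤ)*p + (a.2.val:ℤ)*q + (p:ℤ) [ZMOD (n:ℤ)]) →
      (((b.1:ℕ) = (a.1:ℕ) + 1 ∧ b.2 = a.2) ∨
        ((a.1:ℕ) = t - 1 ∧ (b.1:ℕ) = 0 ∧ b.2 = a.2 + (r : ZMod s))) := by
    intro a b h
    have h1 := hreduce a b p h
    have h2 : (b.1:ℤ)*p ≡ ((a.1:ℤ)+1)*p [ZMOD (t:ℤ)] := modeq_congr h1 rfl (by ring)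
    have h5 := hcancelp _ _ h2
    have hd := h5.dvd
    have hd2 : (t:ℤ) ∣ (b.1:ℤ) - (a.1:ℤ) - 1 := by
      have hd3 := hd.neg_right
      have e : -(((a.1:ℤ)+1) - (b.1:ℤ)) = (b.1:ℤ) - (a.1:ℤ) - 1 := by ring
      rwa [e] at hd3
    have hb1 := b.1.isLt
    have ha1 := a.1.isLt
    rcases dvd_interval ht0' hd2 (by push_cast; omega) (by push_cast; omega) with h6 | h6
    · left
      have hba : (b.1:ℕ) = (a.1:ℕ) + 1 := by omega
      refine ⟨hba, ?_⟩
      have h7 := hresid a b p h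
      have h8 : (b.2.val:ℤ)*q ≡ (a.2.val:ℤ)*q [ZMOD (n:ℤ)] := by
        refine modeq_congr h7 rfl ?_
        have e : (a.1:ℤ) - (b.1:ℤ) = -1 := by omega
        rw [e]; ring
      have h9 := (hmulq _ _).mp h8
      have h10 := (ZMod.intCast_eq_intCast_iff _ _ _).mpr h9
      push_cast at h10
      rwa [hvalN, hvalN] at h10
    · right
      have ha : (a.1:ℕ) = t - 1 := by omega
      have hb : (b.1:ℕ) = 0 := by omega
      refine ⟨ha, hb, ?_⟩
      have h7 := hresid a b p h
      have h8 : (b.2.val:ℤ)*q ≡ (a.2.val:ℤ)*q + (t:ℤ)*p [ZMOD (n:ℤ)] := by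
        refine modeq_congr h7 rfl ?_
        have e : (a.1:ℤ) - (b.1:ℤ) = (t:ℤ) - 1 := by omega
        rw [e]; ring
      have h11 := (Int.ModEq.refl ((a.2.val:ℤ)*q)).add hrq.symm
      have h12 := h8.trans h11
      have h9 : (b.2.val:ℤ)*q ≡ ((a.2.val:ℤ) + r)*q [ZMOD (n:ℤ)] :=
        (modeq_congr h12 rfl (by ring)).symm.symm
      have h13 := (hmulq _ _).mp h9
      have h14 := (ZMod.intCast_eq_intCast_iff _ _ _).mpr h13
      push_cast at h14
      rwa [hvalN, hvalN] at h14
  -- backward constructions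
  have hhor : ∀ a b : Fin t × ZMod s, a.1 = b.1 → b.2 = a.2 + 1 →
      ((b.1:ℤ)*p + (b.2.val:ℤ)*q ≡ (a.1:ℤ)*p + (a.2.val:ℤ)*q + (q:ℤ) [ZMOD (n:ℤ)]) := by
    intro a b h1 h2
    have h3 : (b.2.val:ℤ) ≡ (a.2.val:ℤ) + 1 [ZMOD (s:ℤ)] := by
      rw [h2]
      exact modeq_congr (hvadd a.2 1) rfl (by rw [ZMod.val_one]; push_cast; ring)
    have h4 : (b.2.val:ℤ)*q ≡ ((a.2.val:ℤ)+1)*q [ZMOD (n:ℤ)] := (hmulq _ _).mpr h3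
    refine modeq_congr (h4.add_left ((a.1:ℤ)*p)) ?_ (by ring)
    rw [h1]
  have hvert : ∀ a b : Fin t × ZMod s, (b.1:ℕ) = (a.1:ℕ) + 1 → b.2 = a.2 →
      ((b.1:ℤ)*p + (b.2.val:ℤ)*q ≡ (a.1:ℤ)*p + (a.2.val:ℤ)*q + (p:ℤ) [ZMOD (n:ℤ)]) := by
    intro a b h1 h2
    refine modeq_congr (Int.ModEq.refl ((a.1:ℤ)*p + (a.2.val:ℤ)*q + (p:ℤ))) ?_ rfl
    rw [h2, h1]; push_cast; ring
  have hdiag : ∀ a b : Fin t × ZMod s, (a.1:ℕ) = t - 1 → (b.1:ℕ) = 0 →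
      b.2 = a.2 + (r:ZMod s) →
      ((b.1:ℤ)*p + (b.2.val:ℤ)*q ≡ (a.1:ℤ)*p + (a.2.val:ℤ)*q + (p:ℤ) [ZMOD (n:ℤ)]) := by
    intro a b h1 h2 h3
    have hj : (b.2.val:ℤ) ≡ (a.2.val:ℤ) + r [ZMOD (s:ℤ)] := by
      rw [h3]
      exact (hvadd a.2 r).trans ((Int.ModEq.refl ((a.2.val:ℤ))).add (hvcast r))
    have h4 : (b.2.val:ℤ)*q ≡ ((a.2.val:ℤ)+r)*q [ZMOD (n:ℤ)] := (hmulq _ _).mpr hj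
    have h5 : (b.2.val:ℤ)*q ≡ (a.2.val:ℤ)*q + (t:ℤ)*p [ZMOD (n:ℤ)] :=
      (modeq_congr h4 rfl (by ring)).trans ((Int.ModEq.refl ((a.2.val:ℤ)*q)).add hrq)
    refine modeq_congr h5 ?_ ?_
    · rw [h2]; push_cast; ring
    · rw [h1]; push_cast [Nat.cast_sub (show 1 ≤ t by omega)]; ring
  -- injectivity core
  have hkey0 : ∀ a b : Fin t × ZMod s,
      ((b.1:ℤ)*p + (b.2.val:ℤ)*q ≡ (a.1:ℤ)*p + (a.2.val:ℤ)*q + 0 [ZMOD (n:ℤ)]) → a = b := by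
    intro a b h
    have h1 := hreduce a b 0 h
    have h2 : (b.1:ℤ)*p ≡ (a.1:ℤ)*p [ZMOD (t:ℤ)] := modeq_congr h1 rfl (by ring)
    have h5 := hcancelp _ _ h2
    have hd := h5.dvd
    have hb1 := b.1.isLt
    have ha1 := a.1.isLt
    have h6 : (a.1:ℤ) - (b.1:ℤ) = 0 := by
      rcases dvd_interval ht0' hd (by push_cast; omega) (by push_cast; omega) with h6 | h6
      · exact h6
      · exfalso; omega
    have hfe : a.1 = b.1 := Fin.ext (by omega)
    have h7 := hresid a b 0 h
    have h8 : (b.2.val:ℤ)*q ≡ (a.2.val:ℤ)*q [ZMOD (n:ℤ)] := by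
      refine modeq_congr h7 rfl ?_
      rw [show (a.1:ℤ) - (b.1:ℤ) = 0 from h6]; ring
    have h9 := (hmulq _ _).mp h8
    have h10 := (ZMod.intCast_eq_intCast_iff _ _ _).mpr h9
    push_cast at h10
    rw [hvalN, hvalN] at h10
    exact Prod.ext hfe h10.symm
  -- the map and iso
  let f : Fin t × ZMod s → ZMod n := fun a => (((a.1:ℤ)*p + (a.2.val:ℤ)*q : ℤ) : ZMod n)
  have hfsub : ∀ (a b : Fin t × ZMod s) (c : ℕ), (f b - f a = (c : ZMod n)) ↔
      ((b.1:ℤ)*p + (b.2.val:ℤ)*q ≡ (a.1:ℤ)*p + (a.2.val:ℤ)*q + (c:ℤ) [ZMOD (n:ℤ)]) := by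
    intro a b c
    rw [sub_eq_iff_eq_add']
    show (((b.1:ℤ)*p + (b.2.val:ℤ)*q : ℤ) : ZMod n) =
      (((a.1:ℤ)*p + (a.2.val:ℤ)*q : ℤ) : ZMod n) + (c : ZMod n) ↔ _
    rw [show ((c:ℕ) : ZMod n) = (((c:ℕ):ℤ) : ZMod n) by push_cast; rfl, ← Int.cast_add,
      ZMod.intCast_eq_intCast_iff]
  have hinj : Function.Injective f := by
    intro a b hab
    refine hkey0 a b ((hfsub a b 0).mp ?_)
    rw [hab]; simp
  have hcard : Fintype.card (Fin t × ZMod s) = Fintype.card (ZMod n) := by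
    rw [Fintype.card_prod, Fintype.card_fin, ZMod.card, ZMod.card, hnst, mul_comm]
  have hbij : Function.Bijective f := (Fintype.bijective_iff_injective_and_card f).mpr ⟨hinj, hcard⟩
  let e := Equiv.ofBijective f hbij
  have hmapiff : ∀ a b : Fin t × ZMod s,
      (Cir n p q).Adj (e a) (e b) ↔ (Xgraph s t r).Adj a b := by
    intro a b
    show (Cir n p q).Adj (f a) (f b) ↔ (Xgraph s t r).Adj a b
    simp only [Cir, Xgraph, SimpleGraph.circulantGraph, SimpleGraph.fromRel_adj,
      Set.mem_insert_iff, Set.mem_singleton_iff]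
    constructor
    · rintro ⟨hne, (h|h)|(h|h)⟩
      · refine ⟨fun hab => hne (by rw [hab]), ?_⟩
        rcases hp_case b a ((hfsub b a p).mp h) with h'|h'
        · exact Or.inr (Or.inr (Or.inl h'))
        · exact Or.inr (Or.inr (Or.inr h'))
      · refine ⟨fun hab => hne (by rw [hab]), ?_⟩
        exact Or.inr (Or.inl (hq_case b a ((hfsub b a q).mp h)))
      · refine ⟨fun hab => hne (by rw [hab]), ?_⟩
        rcases hp_case a b ((hfsub a b p).mp h) with h'|h'
        · exact Or.inl (Or.inr (Or.inl h'))
        · exact Or.inl (Or.inr (Or.inr h'))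
      · refine ⟨fun hab => hne (by rw [hab]), ?_⟩
        exact Or.inl (Or.inl (hq_case a b ((hfsub a b q).mp h)))
    · rintro ⟨hne, (⟨h1,h2⟩|⟨h1,h2⟩|⟨h1,h2,h3⟩)|(⟨h1,h2⟩|⟨h1,h2⟩|⟨h1,h2,h3⟩)⟩
      · exact ⟨fun hfe => hne (hinj hfe), Or.inr (Or.inr ((hfsub a b q).mpr (hhor a b h1 h2)))⟩
      · exact ⟨fun hfe => hne (hinj hfe), Or.inr (Or.inl ((hfsub a b p).mpr (hvert a b h1 h2)))⟩
      · exact ⟨fun hfe => hne (hinj hfe), Or.inr (Or.inl ((hfsub a b p).mpr (hdiag a b h1 h2 h3)))⟩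
      · exact ⟨fun hfe => hne (hinj hfe), Or.inl (Or.inr ((hfsub b a q).mpr (hhor b a h1 h2)))⟩
      · exact ⟨fun hfe => hne (hinj hfe), Or.inl (Or.inl ((hfsub b a p).mpr (hvert b a h1 h2)))⟩
      · exact ⟨fun hfe => hne (hinj hfe), Or.inl (Or.inl ((hfsub b a p).mpr (hdiag b a h1 h2 h3)))⟩
  exact ⟨(SimpleGraph.Iso.symm ⟨e, hmapiff _ _⟩)⟩
end
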